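/- Let $G_{a,M}$ be the noncentral $\chi^2_1(M^2/a)$ CDF and define $\tilde H_{a,M}(v)=G_{a,M}^{-1}(1-e^{-v})$ for $v>0$. Then the second derivative satisfies the identity $\tilde H_{a,M}''(v)=B_{a,M}(v)-(\tilde H_{a,M}'(v))^2 J_{a,M}(v)$, where $B_{a,M}(v)=-\tilde H_{a,M}'(v)+(\tilde H_{a,M}'(v))^2\big(\tfrac12+\tfrac{1}{2\tilde H_{a,M}(v)}\big)$ and $J_{a,M}(v)=\frac{\sum_{k=1}^\infty (M^2/a)^k(\tilde H_{a,M}(v))^{k-1}/(2^{2k}(k-1)!\,\Gamma(k+1/2))}{\sum_{k=0}^\infty (M^2/a)^k(\tilde H_{a,M}(v))^{k}/(2^{2k}k!\,\Gamma(k+1/2))}$; moreover $J_{a,M}(v)\le M^2/(2a)$ for all $v>0$. -/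

import Mathlib

/-!
With `c = M / √a`, the CDF of `(Z + c)²` on `(0, ∞)` is `Φ(√y - c) - Φ(-√y - c)`, whose derivative
is the density `g(y) = e^{-(y + c²)/2} cosh(c√y) / √(2πy)`. The hypothesis says that `H` inverts the
cumulative hazard `-log (1 - G)`, so `H' = e^{-v} / g(H)`, and differentiating once more gives
`H'' = -H' - H'² (log g)'(H)` with `(log g)'(y) = c tanh(c√y) / (2√y) - 1/2 - 1/(2y)`.
By `Γ(k + 1/2) = (2k)! √π / (4^k k!)` the two series defining `J` are the Taylor series of
`c sinh(c√x) / (2√(πx))` and `cosh(c√x) / √π`, so `J(x) = c tanh(c√x) / (2√x)`, and `J ≤ c²/2` is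
`u tanh u ≤ u²`.
-/

open MeasureTheory ProbabilityTheory Filter Real Set

/-- The noncentral chi-squared distribution with 1 degree of freedom and noncentrality
`M²/a`: the law of `(Z + M/√a)²` for `Z ∼ N(0,1)`. -/
noncomputable def ncChiSq (a : ℕ) (M : ℝ) : Measure ℝ :=
  Measure.map (fun z => (z + M / Real.sqrt a) ^ 2) (gaussianReal 0 1)

/-- The CDF of the noncentral χ²₁(M²/a) distribution. -/
noncomputable def ncCDF (a : ℕ) (M y : ℝ) : ℝ := ((ncChiSq a M) (Set.Iic y)).toReal

/-- The function `J_{a,M}(x)` (with `x = H̃_{a,M}(v)`): ratio of the two series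
`∑_{k≥1} (M²/a)^k x^{k-1}/(2^{2k}(k-1)!Γ(k+1/2))` and
`∑_{k≥0} (M²/a)^k x^k/(2^{2k}k!Γ(k+1/2))` (the first sum reindexed by `k ↦ k+1`). -/
noncomputable def Jfun (a : ℕ) (M x : ℝ) : ℝ :=
  (∑' k : ℕ, (M ^ 2 / a) ^ (k + 1) * x ^ k /
      (2 ^ (2 * (k + 1)) * Nat.factorial k * Real.Gamma ((k : ℝ) + 1 + 1 / 2))) /
  (∑' k : ℕ, (M ^ 2 / a) ^ k * x ^ k /
      (2 ^ (2 * k) * Nat.factorial k * Real.Gamma ((k : ℝ) + 1 / 2)))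

open scoped Nat Topology

lemma Real.Gamma_nat_add_half_eq_factorial (k : ℕ) :
    Gamma (k + 1 / 2) = (2 * k)! * √π / (4 ^ k * k !) := by
  have h4 : (4 : ℝ) ^ k = 2 ^ k * 2 ^ k := by rw [← mul_pow]; norm_num
  rcases k with _ | k
  · simp [-one_div, Gamma_one_half_eq]
  · rw [Gamma_nat_add_half, show 2 * (k + 1) = (2 * k + 1) + 1 by ring,
      Nat.factorial_eq_mul_doubleFactorial, show 2 * k + 1 + 1 = 2 * (k + 1) by ring,
      Nat.doubleFactorial_two_mul, show 2 * (k + 1) - 1 = 2 * k + 1 by omega, h4]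
    push_cast
    field_simp

lemma Real.sinh_le_mul_cosh {t : ℝ} (ht : 0 ≤ t) : sinh t ≤ t * cosh t := by
  have hsinh := hasSum_sinh t
  have hcosh := (hasSum_cosh t).mul_left t
  refine hasSum_le (fun n => ?_) hsinh hcosh
  rw [pow_succ, mul_div_assoc', mul_comm t]
  gcongr
  omega

lemma Real.mul_tanh_le_sq (u : ℝ) : u * tanh u ≤ u ^ 2 := by
  wlog hu : 0 ≤ u
  · simpa using this (-u) (by linarith)
  rw [tanh_eq_sinh_div_cosh, mul_div_assoc', div_le_iff₀ (cosh_pos u), sq, mul_assoc]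
  exact mul_le_mul_of_nonneg_left (sinh_le_mul_cosh hu) hu

lemma hasSum_cosh_sqrt (c : ℝ) {x : ℝ} (hx : 0 ≤ x) :
    HasSum (fun k : ℕ => (c ^ 2) ^ k * x ^ k /
        (2 ^ (2 * k) * Nat.factorial k * Gamma ((k : ℝ) + 1 / 2)))
      (cosh (c * √x) / √π) := by
  refine ((hasSum_cosh (c * √x)).div_const √π).congr_fun fun k => ?_
  have hnum : (c * √x) ^ (2 * k) = (c ^ 2) ^ k * x ^ k := by
    rw [mul_pow, pow_mul, pow_mul, sq_sqrt hx]
  rw [Gamma_nat_add_half_eq_factorial, hnum, pow_mul, show (2 : ℝ) ^ 2 = 4 by norm_num]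
  field_simp

lemma hasSum_sinh_sqrt (c : ℝ) {x : ℝ} (hx : 0 < x) :
    HasSum (fun k : ℕ => (c ^ 2) ^ (k + 1) * x ^ k /
        (2 ^ (2 * (k + 1)) * Nat.factorial k * Gamma ((k : ℝ) + 1 + 1 / 2)))
      (c * sinh (c * √x) / (2 * √π * √x)) := by
  have hsx : 0 < √x := sqrt_pos.mpr hx
  have hsum := (hasSum_sinh (c * √x)).mul_left (c / (2 * √π * √x))
  rw [show c / (2 * √π * √x) * sinh (c * √x) = c * sinh (c * √x) / (2 * √π * √x) by ring] at hsum
  refine hsum.congr_fun fun k => ?_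
  have hnum : (c * √x) ^ (2 * k + 1) = (c ^ 2) ^ k * x ^ k * (c * √x) := by
    rw [pow_succ, mul_pow, pow_mul, pow_mul, sq_sqrt hx.le]
  rw [show (k : ℝ) + 1 + 1 / 2 = ((k + 1 : ℕ) : ℝ) + 1 / 2 by push_cast; ring,
    Gamma_nat_add_half_eq_factorial, hnum, pow_mul, show (2 : ℝ) ^ 2 = 4 by norm_num,
    show 2 * (k + 1) = (2 * k + 1) + 1 by ring, Nat.factorial_succ (2 * k + 1),
    Nat.factorial_succ k, pow_succ (c ^ 2)]
  push_cast
  field_simp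
  ring

lemma Jfun_eq_tanh (a : ℕ) (M : ℝ) {x : ℝ} (hx : 0 < x) :
    Jfun a M x = M / √a * tanh (M / √a * √x) / (2 * √x) := by
  have hc : M ^ 2 / a = (M / √a) ^ 2 := by rw [div_pow, sq_sqrt a.cast_nonneg]
  rw [Jfun, hc, (hasSum_sinh_sqrt _ hx).tsum_eq, (hasSum_cosh_sqrt _ hx.le).tsum_eq,
    tanh_eq_sinh_div_cosh]
  have hπ := sqrt_pos.mpr pi_pos
  have hcosh := cosh_pos (M / √a * √x)
  field_simp

lemma Jfun_le (a : ℕ) (M : ℝ) {x : ℝ} (hx : 0 < x) : Jfun a M x ≤ M ^ 2 / (2 * a) := by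
  have hsx : 0 < √x := sqrt_pos.mpr hx
  have hc : M ^ 2 / (2 * a) = (M / √a) ^ 2 / 2 := by
    rw [div_pow, sq_sqrt a.cast_nonneg, div_div, mul_comm]
  rw [Jfun_eq_tanh a M hx, hc, div_le_div_iff₀ (by positivity) two_pos]
  set c := M / √a
  have key : c * tanh (c * √x) * √x ≤ c ^ 2 * √x * √x := by linarith [mul_tanh_le_sq (c * √x)]
  linarith [le_of_mul_le_mul_right key hsx]

noncomputable def ncPDF (c y : ℝ) : ℝ :=
  exp (-(y + c ^ 2) / 2) * cosh (c * √y) / (√(2 * π) * √y)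

lemma ncPDF_pos (c : ℝ) {y : ℝ} (hy : 0 < y) : 0 < ncPDF c y := by
  have hs := sqrt_pos.mpr hy
  have hcosh := cosh_pos (c * √y)
  unfold ncPDF
  positivity

lemma ncCDF_eq_integral (a : ℕ) (M : ℝ) {y : ℝ} (hy : 0 ≤ y) :
    ncCDF a M y = ∫ t in (-√y - M / √a)..(√y - M / √a), gaussianPDFReal 0 1 t := by
  set c := M / √a
  have hle : -√y - c ≤ √y - c := by linarith [sqrt_nonneg y]
  have hpre : (fun z => (z + c) ^ 2) ⁻¹' Iic y = Icc (-√y - c) (√y - c) := by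
    ext z
    simp only [mem_preimage, mem_Iic, mem_Icc, Real.sq_le hy]
    constructor <;> rintro ⟨h₁, h₂⟩ <;> constructor <;> linarith
  rw [ncCDF, ncChiSq, Measure.map_apply (by fun_prop) measurableSet_Iic, hpre,
    gaussianReal_apply_eq_integral 0 one_ne_zero, integral_Icc_eq_integral_Ioc,
    ← intervalIntegral.integral_of_le hle, ENNReal.toReal_ofReal]
  exact intervalIntegral.integral_nonneg hle fun t _ => gaussianPDFReal_nonneg 0 1 t

lemma hasDerivAt_ncCDF (a : ℕ) (M : ℝ) {y : ℝ} (hy : 0 < y) :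
    HasDerivAt (ncCDF a M) (ncPDF (M / √a) y) y := by
  set c := M / √a
  have hpdf : Continuous (gaussianPDFReal 0 1) := by rw [gaussianPDFReal_def]; fun_prop
  set pdf := gaussianPDFReal 0 1
  set F := fun u => ∫ t in (0 : ℝ)..u, pdf t
  have hF : ∀ u, HasDerivAt F (pdf u) u := fun u => (hpdf.integral_hasStrictDerivAt 0 u).hasDerivAt
  have hG : ncCDF a M =ᶠ[𝓝 y] fun z => F (√z - c) - F (-√z - c) := by
    filter_upwards [Ioi_mem_nhds hy] with z hz
    rw [ncCDF_eq_integral a M (le_of_lt hz), intervalIntegral.integral_interval_sub_left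
      (hpdf.intervalIntegrable _ _) (hpdf.intervalIntegrable _ _)]
  have hsqrt := hasDerivAt_sqrt hy.ne'
  refine (((hF _).comp y (hsqrt.sub_const c)).sub
    ((hF _).comp y (hsqrt.fun_neg.sub_const c))).congr_of_eventuallyEq hG |>.congr_deriv ?_
  have hpdf_eq : ∀ s, pdf (s - c) = exp (-(s ^ 2 + c ^ 2) / 2) * exp (c * s) / √(2 * π) := by
    intro s
    simp only [pdf, gaussianPDFReal_def, NNReal.coe_one, mul_one, sub_zero, ← exp_add]
    ring_nf
  have hs := sqrt_pos.mpr hy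
  rw [hpdf_eq, hpdf_eq, neg_sq, sq_sqrt hy.le, ncPDF, cosh_eq]
  field_simp
  ring

lemma hasDerivAt_ncPDF (c : ℝ) {y : ℝ} (hy : 0 < y) :
    HasDerivAt (ncPDF c) (ncPDF c y * (c * tanh (c * √y) / (2 * √y) - 1 / 2 - 1 / (2 * y))) y := by
  have hs : 0 < √y := sqrt_pos.mpr hy
  have hsqrt := hasDerivAt_sqrt hy.ne'
  have hexp := ((((hasDerivAt_id y).add_const (c ^ 2)).fun_neg.div_const 2)).exp
  have hcosh := (hsqrt.const_mul c).cosh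
  have hden := hsqrt.const_mul √(2 * π)
  refine ((hexp.fun_mul hcosh).fun_div hden (by positivity)).congr_deriv ?_
  have hcosh_pos := cosh_pos (c * √y)
  have h2π := sqrt_pos.mpr (by positivity : (0 : ℝ) < 2 * π)
  rw [show 1 / (2 * y) = 1 / (2 * √y ^ 2) by rw [sq_sqrt hy.le]]
  simp only [ncPDF, tanh_eq_sinh_div_cosh, id]
  field_simp
  ring

lemma strictMonoOn_ncCDF (a : ℕ) (M : ℝ) : StrictMonoOn (ncCDF a M) (Ioi 0) := by
  refine strictMonoOn_of_deriv_pos (convex_Ioi 0)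
    (fun y hy => (hasDerivAt_ncCDF a M hy).continuousAt.continuousWithinAt) fun y hy => ?_
  rw [interior_Ioi] at hy
  rw [(hasDerivAt_ncCDF a M hy).deriv]
  exact ncPDF_pos _ hy

lemma ncCDF_mem_Ioo (a : ℕ) (M : ℝ) {y : ℝ} (hy : 0 < y) : ncCDF a M y ∈ Ioo 0 1 := by
  have : IsProbabilityMeasure (ncChiSq a M) := Measure.isProbabilityMeasure_map (by fun_prop)
  have hmono := strictMonoOn_ncCDF a M
  constructor
  · calc 0 ≤ ncCDF a M (y / 2) := ENNReal.toReal_nonneg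
      _ < ncCDF a M y := hmono (half_pos hy) hy (half_lt_self hy)
  · calc ncCDF a M y < ncCDF a M (y + 1) := hmono hy (show 0 < y + 1 by linarith) (lt_add_one y)
      _ ≤ 1 := measureReal_le_one

noncomputable def ncCumHazard (a : ℕ) (M y : ℝ) : ℝ := -log (1 - ncCDF a M y)

lemma hasDerivAt_ncCumHazard (a : ℕ) (M : ℝ) {y : ℝ} (hy : 0 < y) :
    HasDerivAt (ncCumHazard a M) (ncPDF (M / √a) y / (1 - ncCDF a M y)) y := by
  have hsurv : 1 - ncCDF a M y ≠ 0 := by linarith [(ncCDF_mem_Ioo a M hy).2]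
  refine (((hasDerivAt_ncCDF a M hy).const_sub 1).log hsurv).fun_neg.congr_deriv ?_
  ring

lemma strictMonoOn_ncCumHazard (a : ℕ) (M : ℝ) : StrictMonoOn (ncCumHazard a M) (Ioi 0) := by
  intro y₁ hy₁ y₂ hy₂ hlt
  have hG := strictMonoOn_ncCDF a M hy₁ hy₂ hlt
  have hG₂ := (ncCDF_mem_Ioo a M hy₂).2
  exact neg_lt_neg (log_lt_log (by linarith) (by linarith))

lemma ncCumHazard_pos (a : ℕ) (M : ℝ) {y : ℝ} (hy : 0 < y) : 0 < ncCumHazard a M y := by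
  obtain ⟨h₀, h₁⟩ := ncCDF_mem_Ioo a M hy
  exact neg_pos.mpr (log_neg (by linarith) (by linarith))

theorem StrictMonoOn.continuousOn_of_leftInvOn {α β : Type*} [LinearOrder α]
    [TopologicalSpace α] [OrderTopology α] [DenselyOrdered α] [LinearOrder β]
    [TopologicalSpace β] [OrderTopology β] {f : α → β} {g : β → α} {s : Set α} {t : Set β}
    (hs : IsOpen s) (ht : IsOpen t) (hf : StrictMonoOn f s) (hfst : MapsTo f s t)
    (hgts : MapsTo g t s) (hfg : LeftInvOn f g t) : ContinuousOn g t := by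
  have hg : StrictMonoOn g t := fun v₁ hv₁ v₂ hv₂ hlt => by
    by_contra! hle
    have := hf.monotoneOn (hgts hv₂) (hgts hv₁) hle
    rw [hfg hv₁, hfg hv₂] at this
    exact hlt.not_ge this
  have himage : g '' t = s := by
    refine (image_subset_iff.mpr hgts).antisymm fun y hy => ⟨f y, hfst hy, ?_⟩
    exact hf.injOn (hgts (hfst hy)) hy (hfg (hfst hy))
  refine fun v hv => (hg.continuousAt_of_image_mem_nhds (ht.mem_nhds hv) ?_).continuousWithinAt
  exact himage ▸ hs.mem_nhds (hgts hv)

lemma hasDerivAt_of_ncCDF_comp_eq {a : ℕ} {M : ℝ} {H : ℝ → ℝ}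
    (hH : ∀ v ∈ Ioi (0 : ℝ), 0 < H v ∧ ncCDF a M (H v) = 1 - exp (-v)) {v : ℝ} (hv : 0 < v) :
    HasDerivAt H (exp (-v) / ncPDF (M / √a) (H v)) v := by
  have hinv : LeftInvOn (ncCumHazard a M) H (Ioi 0) := fun w hw => by
    rw [ncCumHazard, (hH w hw).2, sub_sub_cancel, log_exp, neg_neg]
  have hcont : ContinuousOn H (Ioi 0) :=
    (strictMonoOn_ncCumHazard a M).continuousOn_of_leftInvOn isOpen_Ioi isOpen_Ioi
      (fun y hy => ncCumHazard_pos a M hy) (fun w hw => (hH w hw).1) hinv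
  obtain ⟨hHv, hGHv⟩ := hH v hv
  have hderiv := (hasDerivAt_ncCumHazard a M hHv).of_local_left_inverse
    (hcont.continuousAt (Ioi_mem_nhds hv)) (div_ne_zero (ncPDF_pos _ hHv).ne' (by
      rw [hGHv, sub_sub_cancel]; exact (exp_pos _).ne'))
    (eventually_of_mem (Ioi_mem_nhds hv) hinv)
  rwa [hGHv, sub_sub_cancel, inv_div] at hderiv

lemma hasDerivAt_deriv_of_hasDerivAt_eq_exp_neg_div {H g : ℝ → ℝ} {v ℓ : ℝ}
    (hH : ∀ᶠ w in 𝓝 v, HasDerivAt H (exp (-w) / g (H w)) w)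
    (hg : HasDerivAt g (g (H v) * ℓ) (H v)) (hg₀ : g (H v) ≠ 0) :
    HasDerivAt (deriv H) (-deriv H v - deriv H v ^ 2 * ℓ) v := by
  have hHv := hH.self_of_nhds
  have hexp : HasDerivAt (fun w => exp (-w)) (-exp (-v)) v := by
    simpa using (hasDerivAt_neg v).exp
  refine (hexp.fun_div (hg.comp v hHv) hg₀).congr_of_eventuallyEq
    (hH.mono fun w hw => hw.deriv) |>.congr_deriv ?_
  rw [hHv.deriv, Function.comp_apply]
  field_simp

theorem tildeH_second_deriv_identity_general (a : ℕ) (M : ℝ)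
    (H : ℝ → ℝ)
    (hH : ∀ v ∈ Set.Ioi (0:ℝ), 0 < H v ∧ ncCDF a M (H v) = 1 - Real.exp (-v)) :
    ∀ v ∈ Set.Ioi (0:ℝ),
      deriv (deriv H) v =
        (-(deriv H v) + (deriv H v) ^ 2 * (1 / 2 + 1 / (2 * H v)))
          - (deriv H v) ^ 2 * Jfun a M (H v) ∧
      Jfun a M (H v) ≤ M ^ 2 / (2 * a) := by
  intro v hv
  have hHv : 0 < H v := (hH v hv).1
  have hH'' := hasDerivAt_deriv_of_hasDerivAt_eq_exp_neg_div
    (eventually_of_mem (Ioi_mem_nhds hv) fun w hw => hasDerivAt_of_ncCDF_comp_eq hH hw)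
    (hasDerivAt_ncPDF _ hHv) (ncPDF_pos _ hHv).ne'
  refine ⟨?_, Jfun_le a M hHv⟩
  rw [hH''.deriv, Jfun_eq_tanh a M hHv]
  ring

/-- Identity for the second derivative of `H̃_{a,M} = G_{a,M}⁻¹ ∘ G`:
`H̃'' = B_{a,M} - (H̃')² J_{a,M}`, with
`B_{a,M}(v) = -H̃'(v) + (H̃'(v))²(1/2 + 1/(2H̃(v)))`, and `J_{a,M} ≤ M²/(2a)`. -/
theorem tildeH_second_deriv_identity (a : ℕ) (ha : 1 ≤ a) (M : ℝ) (hM : 0 ≤ M)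
    (H : ℝ → ℝ)
    (hH : ∀ v ∈ Set.Ioi (0:ℝ), 0 < H v ∧ ncCDF a M (H v) = 1 - Real.exp (-v)) :
    ∀ v ∈ Set.Ioi (0:ℝ),
      deriv (deriv H) v =
        (-(deriv H v) + (deriv H v) ^ 2 * (1 / 2 + 1 / (2 * H v)))
          - (deriv H v) ^ 2 * Jfun a M (H v) ∧
      Jfun a M (H v) ≤ M ^ 2 / (2 * a) :=
  tildeH_second_deriv_identity_general a M H hH
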